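/- arXiv:2406.02891 — 3 statements merged into one kernel-verified Lean document; each statement's English description precedes it below -/
import Mathlib

section
/- Early-termination correctness for cover tree search: suppose p* minimizes D(q,·) over X, the set Q_{i-1} contains an ancestor of p* (so D(q, Q_{i-1}) ≤ D(q,p*) + 2^i), and the termination condition D(q, Q_{i-1}) ≥ 2^i(1 + 1/ε) holds for some ε ∈ (0,1). Then 2^i ≤ ε·D(q,p*), and consequently the closest point of Q_{i-1} to q under D is a (1+ε)-approximate nearest neighbor: D(q, Q_{i-1}) ≤ (1+ε)·D(q,p*). -/
theorem le_mul_of_mul_one_add_one_div_le_add {𝕜 : Type*} [Field 𝕜] [LinearOrder 𝕜]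
    [IsStrictOrderedRing 𝕜] {t ε d : 𝕜} (hε : 0 < ε) (h : t * (1 + 1 / ε) ≤ d + t) :
    t ≤ ε * d := by
  have hdiv : t / ε ≤ d := by
    have hsplit : t * (1 + 1 / ε) = t + t / ε := by ring
    linarith
  rwa [div_le_iff₀ hε, mul_comm] at hdiv

theorem stmt9_general {X : Type*} [MetricSpace X] (q pstar : X)
    (eps : ℝ) (heps0 : 0 < eps)
    (i : ℤ)
    (Q : Finset X) (hQ : Q.Nonempty)
    (hub : Q.inf' hQ (fun p => dist q p) ≤ dist q pstar + (2 : ℝ) ^ i)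
    (hterm : (2 : ℝ) ^ i * (1 + 1 / eps) ≤ Q.inf' hQ (fun p => dist q p)) :
    (2 : ℝ) ^ i ≤ eps * dist q pstar ∧
      Q.inf' hQ (fun p => dist q p) ≤ (1 + eps) * dist q pstar := by
  have hscale : (2 : ℝ) ^ i ≤ eps * dist q pstar :=
    le_mul_of_mul_one_add_one_div_le_add heps0 (hterm.trans hub)
  refine ⟨hscale, ?_⟩
  calc Q.inf' hQ (fun p => dist q p) ≤ dist q pstar + (2 : ℝ) ^ i := hub
    _ ≤ dist q pstar + eps * dist q pstar := by gcongr
    _ = (1 + eps) * dist q pstar := by ring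

/-- Early-termination correctness for cover tree search. If
`D(q, Q_{i-1}) ≤ D(q, p*) + 2^i` (an ancestor of the true nearest neighbor `p*` is in
`Q_{i-1}`) and the termination condition `D(q, Q_{i-1}) ≥ 2^i (1 + 1/ε)` holds for
`ε ∈ (0,1)`, then `2^i ≤ ε · D(q, p*)` and `D(q, Q_{i-1}) ≤ (1 + ε) · D(q, p*)`. -/
theorem stmt9 {X : Type*} [MetricSpace X] (q pstar : X)
    (hmin : ∀ p : X, dist q pstar ≤ dist q p)
    (eps : ℝ) (heps0 : 0 < eps) (heps1 : eps < 1)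
    (i : ℤ)
    (Q : Finset X) (hQ : Q.Nonempty)
    (hub : Q.inf' hQ (fun p => dist q p) ≤ dist q pstar + (2 : ℝ) ^ i)
    (hterm : (2 : ℝ) ^ i * (1 + 1 / eps) ≤ Q.inf' hQ (fun p => dist q p)) :
    (2 : ℝ) ^ i ≤ eps * dist q pstar ∧
      Q.inf' hQ (fun p => dist q p) ≤ (1 + eps) * dist q pstar :=
  stmt9_general q pstar eps heps0 i Q hQ hub hterm
end

section
/- If a graph G on dataset X is α-shortcut reachable under a metric D with α ≥ 3, then for every vertex p and target q, greedy routing makes progress: either (p,q) ∈ E, or there is a neighbor p' of p with D(p',q) ≤ D(p,q)/α < D(p,q); hence from any start vertex, the sequence of greedy steps (always moving to the neighbor minimizing D(·,q)) reaches a vertex adjacent to or equal to q after at most log_α(Δ) steps, where Δ is the aspect ratio of X under D. -/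
/-! Every vertex `p ≠ q` not adjacent to `q` has a neighbour `p' ≠ q` with `α D(p',q) ≤ D(p,q)`,
so `D(p,q) ≥ α Δmin`, and the greedy successor is at least as close to `q` as `p'`. Along a
greedy walk that never reaches `q` or a neighbour of `q`, the distance to `q` therefore shrinks by
the factor `α` per step: after `N = ⌈log_α (Δmax/Δmin)⌉` steps it would be at most
`Δmax / α^N ≤ Δmin`, contradicting `D(v N, q) ≥ α Δmin`. -/

theorem Real.le_pow_natCeil_logb {b x : ℝ} (hb : 1 < b) (hx : 0 < x) :
    x ≤ b ^ ⌈Real.logb b x⌉₊ := by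
  rw [← Real.rpow_natCast, ← Real.logb_le_iff_le_rpow hb hx]
  exact Nat.le_ceil _

theorem pow_mul_le_of_forall_mul_succ_le {α : ℝ} (hα : 0 ≤ α) {d : ℕ → ℝ} {n : ℕ}
    (hd : ∀ k < n, α * d (k + 1) ≤ d k) : α ^ n * d n ≤ d 0 := by
  induction n with
  | zero => simp
  | succ n ih =>
    calc α ^ (n + 1) * d (n + 1) = α ^ n * (α * d (n + 1)) := by ring
      _ ≤ α ^ n * d n := by gcongr; exact hd n n.lt_succ_self
      _ ≤ d 0 := ih fun k hk => hd k (hk.trans n.lt_succ_self)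

section ShortcutReachable

variable {X : Type*} [MetricSpace X] {E : X → X → Prop} {q : X} {α : ℝ}

theorem exists_adj_dist_le_div_of_shortcut (hα : 1 < α)
    (hreach : ∀ p : X, p ≠ q → ¬ E p q → ∃ p', E p p' ∧ α * dist p' q ≤ dist p q)
    {p : X} (hp : p ≠ q) :
    E p q ∨ ∃ p', E p p' ∧ dist p' q ≤ dist p q / α ∧ dist p' q < dist p q := by
  by_cases hE : E p q
  · exact Or.inl hE
  obtain ⟨p', hpp', hle⟩ := hreach p hp hE
  have hdiv : dist p' q ≤ dist p q / α := by
    rw [le_div_iff₀ (by linarith)]; linarith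
  exact Or.inr ⟨p', hpp', hdiv, hdiv.trans_lt (div_lt_self (dist_pos.mpr hp) hα)⟩

theorem mul_le_dist_of_not_adj (hα : 0 ≤ α)
    (hreach : ∀ p : X, p ≠ q → ¬ E p q → ∃ p', E p p' ∧ α * dist p' q ≤ dist p q)
    {Δmin : ℝ} (hmin : ∀ x y : X, x ≠ y → Δmin ≤ dist x y)
    {p : X} (hp : p ≠ q) (hE : ¬ E p q) : α * Δmin ≤ dist p q := by
  obtain ⟨p', hpp', hle⟩ := hreach p hp hE
  have hp' : p' ≠ q := by rintro rfl; exact hE hpp'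
  calc α * Δmin ≤ α * dist p' q := by gcongr; exact hmin p' q hp'
    _ ≤ dist p q := hle

theorem mul_dist_greedy_succ_le (hα : 0 ≤ α)
    (hreach : ∀ p : X, p ≠ q → ¬ E p q → ∃ p', E p p' ∧ α * dist p' q ≤ dist p q)
    {v : ℕ → X}
    (hgreedy : ∀ n : ℕ, v n ≠ q → ¬ E (v n) q →
      E (v n) (v (n + 1)) ∧ ∀ p', E (v n) p' → dist (v (n + 1)) q ≤ dist p' q)
    {n : ℕ} (hn : v n ≠ q) (hE : ¬ E (v n) q) :
    α * dist (v (n + 1)) q ≤ dist (v n) q := by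
  obtain ⟨p', hpp', hle⟩ := hreach (v n) hn hE
  calc α * dist (v (n + 1)) q ≤ α * dist p' q := by gcongr; exact (hgreedy n hn hE).2 p' hpp'
    _ ≤ dist (v n) q := hle

end ShortcutReachable

/-- Greedy routing on an `α`-shortcut reachable graph. If `G = (X, E)` is
`α`-shortcut reachable under a metric `D = dist` with `α ≥ 3`, then from every vertex
`p ≠ q` either `(p, q) ∈ E` or some neighbor `p'` of `p` satisfies
`D(p', q) ≤ D(p, q)/α < D(p, q)`; consequently, any greedy walk `v` (always moving to
the neighbor minimizing `D(·, q)`) reaches, within `⌈log_α Δ⌉` steps, a vertex adjacent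
to or equal to `q`, where `Δ = Δmax / Δmin` is the aspect ratio of `X` under `D`. -/
theorem stmt11 {X : Type*} [MetricSpace X] (E : X → X → Prop) (q : X)
    (α : ℝ) (hα : 3 ≤ α)
    (hreach : ∀ p : X, p ≠ q → ¬ E p q →
      ∃ p', E p p' ∧ α * dist p' q ≤ dist p q)
    (Δmax Δmin : ℝ) (hΔmin : 0 < Δmin)
    (hmax : ∀ x y : X, dist x y ≤ Δmax)
    (hmin : ∀ x y : X, x ≠ y → Δmin ≤ dist x y)
    (v : ℕ → X)
    (hgreedy : ∀ n : ℕ, v n ≠ q → ¬ E (v n) q →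
      E (v n) (v (n + 1)) ∧ ∀ p', E (v n) p' → dist (v (n + 1)) q ≤ dist p' q) :
    (∀ p : X, p ≠ q → E p q ∨
      ∃ p', E p p' ∧ dist p' q ≤ dist p q / α ∧ dist p' q < dist p q) ∧
    ∃ n : ℕ, n ≤ ⌈Real.logb α (Δmax / Δmin)⌉₊ ∧ (E (v n) q ∨ v n = q) := by
  have hα1 : 1 < α := by linarith
  refine ⟨fun p hp => exists_adj_dist_le_div_of_shortcut hα1 hreach hp, ?_⟩
  by_contra! hnever
  set N := ⌈Real.logb α (Δmax / Δmin)⌉₊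
  have hαN : 0 < α ^ N := by positivity
  have hfar : α * Δmin ≤ dist (v N) q :=
    mul_le_dist_of_not_adj (by linarith) hreach hmin (hnever N le_rfl).2 (hnever N le_rfl).1
  have hΔmax : 0 < Δmax := hΔmin.trans_le ((hmin _ _ (hnever N le_rfl).2).trans (hmax _ _))
  have hshrink : α ^ N * (α * Δmin) ≤ α ^ N * Δmin :=
    calc α ^ N * (α * Δmin) ≤ α ^ N * dist (v N) q := by gcongr
      _ ≤ dist (v 0) q :=
        pow_mul_le_of_forall_mul_succ_le (d := fun n => dist (v n) q) (by linarith)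
          fun k hk => mul_dist_greedy_succ_le (by linarith) hreach hgreedy
            (hnever k hk.le).2 (hnever k hk.le).1
      _ ≤ Δmax := hmax _ _
      _ ≤ α ^ N * Δmin :=
        (div_le_iff₀ hΔmin).mp (Real.le_pow_natCeil_logb hα1 (div_pos hΔmax hΔmin))
  exact hshrink.not_gt (mul_lt_mul_of_pos_left (lt_mul_of_one_lt_left hΔmin hα1) hαN)
end

section
/- Tightness of the re-ranking bound: for every C > 1 and every k ≥ 1, there exists a finite metric space, metrics d and D with d a C-approximation of D, a dataset P and query q, such that every point in the set of k points of P closest to q under d has D-distance to q at least C' · min_{p∈P} D(q,p) for any C' < C — i.e., the re-ranking approach cannot guarantee better than a C-approximation. (Construct: it suffices to exhibit such an instance for C' arbitrarily close to C, e.g. on the real line with k+1 points.) -/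
/-!
Work on the real line with `q = 0`, `d x y = |x - y|` and `D x y = |φ x - φ y|` for
`φ t = max t (C t)`, which stretches the positive half-line by `C` and fixes the negative one,
so `d ≤ D ≤ C d`. Put `k` points in `[1, 1 + ε)` and the `D`-nearest neighbour at `-(1 + ε)`:
under `d` the `k` points win, yet under `D` they are at distance at least `C` while the
neighbour is at distance `1 + ε`, and `C / (1 + ε) ≥ C - δ` once `ε` is small.
-/

open Finset Function

namespace Rerank

def IsMetric {X : Type*} (d : X → X → ℝ) : Prop :=
  (∀ x, d x x = 0) ∧ (∀ x y, x ≠ y → 0 < d x y) ∧ (∀ x y, d x y = d y x) ∧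
    (∀ x y z, d x z ≤ d x y + d y z)

theorem isMetric_abs_sub_comp {X : Type*} {f : X → ℝ} (hf : Injective f) :
    IsMetric fun x y => |f x - f y| :=
  ⟨fun _ => by simp, fun _ _ hxy => abs_pos.2 (sub_ne_zero.2 (hf.ne hxy)),
    fun _ _ => abs_sub_comm _ _, fun _ _ _ => abs_sub_le _ _ _⟩

def stretch (C t : ℝ) : ℝ := max t (C * t)

variable {C : ℝ}

theorem stretch_of_nonneg (hC : 1 ≤ C) {t : ℝ} (ht : 0 ≤ t) : stretch C t = C * t :=
  max_eq_right (by nlinarith)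

theorem stretch_of_nonpos (hC : 1 ≤ C) {t : ℝ} (ht : t ≤ 0) : stretch C t = t :=
  max_eq_left (by nlinarith)

theorem sub_le_stretch_sub_stretch_le (hC : 1 ≤ C) {a b : ℝ} (hab : a ≤ b) :
    b - a ≤ stretch C b - stretch C a ∧ stretch C b - stretch C a ≤ C * (b - a) := by
  rcases le_total 0 a with ha | ha
  · rw [stretch_of_nonneg hC ha, stretch_of_nonneg hC (ha.trans hab)]
    constructor <;> nlinarith
  rcases le_total 0 b with hb | hb
  · rw [stretch_of_nonneg hC hb, stretch_of_nonpos hC ha]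
    constructor <;> nlinarith
  · rw [stretch_of_nonpos hC hb, stretch_of_nonpos hC ha]
    constructor <;> nlinarith

theorem abs_sub_le_abs_stretch_sub_stretch_le (hC : 1 ≤ C) (a b : ℝ) :
    |a - b| ≤ |stretch C a - stretch C b| ∧ |stretch C a - stretch C b| ≤ C * |a - b| := by
  wlog hab : a ≤ b generalizing a b
  · simpa only [abs_sub_comm] using this b a (le_of_not_ge hab)
  obtain ⟨hlow, hup⟩ := sub_le_stretch_sub_stretch_le hC hab
  rw [abs_sub_comm a, abs_sub_comm (stretch C a), abs_of_nonneg (sub_nonneg.2 hab),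
    abs_of_nonneg (by linarith)]
  exact ⟨hlow, hup⟩

theorem stretch_injective (hC : 1 ≤ C) : Injective (stretch C) := fun a b hab => by
  have := (abs_sub_le_abs_stretch_sub_stretch_le hC a b).1
  rw [hab, sub_self, abs_zero, abs_nonpos_iff, sub_eq_zero] at this
  exact this

end Rerank

open Rerank in
/-- Tightness of the re-ranking bound. For every `C > 1`, `k ≥ 1` and
`δ > 0`, there exists a finite metric space (metrics `d`, `D` on a type `X` with `d`
a `C`-approximation of `D`), a dataset `P`, a query `q` and a top-`k` set `S ⊆ P`
under `d` (of size `k`, with all of `P \ S` at `d`-distance from `q` at least that of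
any point of `S`), such that every point of `S` has `D`-distance to `q` at least
`(C − δ)` times the distance from `q` to its true `D`-nearest neighbor in `P`. -/
theorem stmt16 (C : ℝ) (hC : 1 < C) (k : ℕ) (hk : 1 ≤ k) (δ : ℝ) (hδ : 0 < δ) :
    ∃ (X : Type) (_ : DecidableEq X) (d D : X → X → ℝ) (P S : Finset X)
      (q pstar : X),
      -- d is a metric
      (∀ x, d x x = 0) ∧ (∀ x y, x ≠ y → 0 < d x y) ∧ (∀ x y, d x y = d y x) ∧
      (∀ x y z, d x z ≤ d x y + d y z) ∧
      -- D is a metric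
      (∀ x, D x x = 0) ∧ (∀ x y, x ≠ y → 0 < D x y) ∧ (∀ x y, D x y = D y x) ∧
      (∀ x y z, D x z ≤ D x y + D y z) ∧
      -- d is a C-approximation of D
      (∀ x y, d x y ≤ D x y ∧ D x y ≤ C * d x y) ∧
      -- S is the top-k set of P under d
      S ⊆ P ∧ S.card = k ∧ S.Nonempty ∧
      (∀ p ∈ S, ∀ p' ∈ P, p' ∉ S → d p q ≤ d p' q) ∧
      -- pstar is the true nearest neighbor in P under D
      pstar ∈ P ∧ (∀ p' ∈ P, D q pstar ≤ D q p') ∧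
      -- every point of S (in particular the re-ranked answer) is ≥ (C − δ)-far
      (∀ p ∈ S, (C - δ) * D q pstar ≤ D q p) := by
  set ε := min (C - 1) (δ / C)
  have hε : 0 < ε := lt_min (by linarith) (by positivity)
  have hεC : 1 + ε ≤ C := by linarith [min_le_left (C - 1) (δ / C)]
  have hεδ : (C - δ) * (1 + ε) ≤ C := by
    have : C * ε ≤ δ := (le_div_iff₀' (by linarith)).1 (min_le_right _ _)
    nlinarith
  obtain ⟨S, hS, hSk⟩ := (Set.Ico_infinite (lt_add_of_pos_right 1 hε)).exists_subset_card_eq k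
  have hDS : ∀ s ∈ S, |stretch C 0 - stretch C s| = C * s := fun s hs => by
    have hs1 : 1 ≤ s := (hS hs).1
    rw [stretch_of_nonneg hC.le le_rfl, stretch_of_nonneg hC.le (by linarith), mul_zero,
      zero_sub, abs_neg, abs_of_pos (by positivity)]
  have hDstar : |stretch C 0 - stretch C (-(1 + ε))| = 1 + ε := by
    rw [stretch_of_nonneg hC.le le_rfl, stretch_of_nonpos hC.le (by linarith), mul_zero,
      zero_sub, neg_neg, abs_of_pos (by linarith)]
  obtain ⟨d0, dpos, dsymm, dtri⟩ := isMetric_abs_sub_comp (f := id) injective_id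
  obtain ⟨D0, Dpos, Dsymm, Dtri⟩ := isMetric_abs_sub_comp (stretch_injective hC.le)
  refine ⟨ℝ, inferInstance, fun x y => |x - y|, fun x y => |stretch C x - stretch C y|,
    insert (-(1 + ε)) S, S, 0, -(1 + ε), d0, dpos, dsymm, dtri, D0, Dpos, Dsymm, Dtri,
    abs_sub_le_abs_stretch_sub_stretch_le hC.le, subset_insert _ _, hSk,
    card_pos.1 (hSk ▸ hk), ?_, mem_insert_self _ _, ?_, ?_⟩
  · intro p hp p' hp' hp'S
    obtain rfl := (mem_insert.1 hp').resolve_right hp'S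
    obtain ⟨hp1, hpε⟩ := hS hp
    simp only [sub_zero, abs_neg]
    rw [abs_of_pos (by linarith), abs_of_pos (by linarith)]
    exact hpε.le
  · simp only [forall_mem_insert, hDstar, le_refl, true_and]
    exact fun s hs => by nlinarith [(hS hs).1, hDS s hs]
  · exact fun s hs => by nlinarith [(hS hs).1, hDS s hs]
end
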